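/- arXiv:2402.03975 — 2 statements merged into one kernel-verified Lean document; each statement's English description precedes it below -/
import Mathlib

section
/- Suppose the graph G is ergodic and consider the random model. For every α > 0, the probability that there exists an edge (i,j) ∈ E with Z_{ij}(r) ∈ ℝ and |r_{ij} − Z_{ij}(r)| ≤ α is at most 2α·m·φ. -/
/-!
The threshold `Z_e(r)` does not depend on `r_e`, and `r_e` is independent of the other weights,
so conditionally on them the event `|r_e - Z_e(r)| ≤ α` asks `r_e` to fall into an interval of
length `2α`, which has probability at most `2αφ`; a union bound over the `m` edges concludes.

The real work is the measurability of `Z_e`. For fixed policies the set of weights making them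
bias-induced is closed: a bias can be compressed to size `O(n ‖r‖)` without changing which
inequalities of the ergodic equation it satisfies, so the relevant projection has bounded fibres.
Hence each cell `P^{σ,τ}` is locally closed, and the projection of a locally closed subset of a
Euclidean space is σ-compact, hence Borel.
-/

open MeasureTheory

/-- Weight of a pair of vertices: the weight of the corresponding edge if it exists, `0`
otherwise. -/
noncomputable def wt {n : ℕ} (E : Finset (Fin n × Fin n))
    (r : {e : Fin n × Fin n // e ∈ E} → ℝ) (p : Fin n × Fin n) : ℝ :=
  if h : p ∈ E then r ⟨p, h⟩ else 0

/-- The set of values `r_{ij} + u_j` over the edges `(i,j)` going out of `i`. -/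
def outVals {n : ℕ} (E : Finset (Fin n × Fin n)) (r : {e : Fin n × Fin n // e ∈ E} → ℝ)
    (u : Fin n → ℝ) (i : Fin n) : Set ℝ :=
  {v | ∃ j : Fin n, (i, j) ∈ E ∧ v = wt E r (i, j) + u j}

/-- `(λ, u)` solves the ergodic equation:
`λ + u i = max_{(i,j) ∈ E} (r_{ij} + u_j)` for `i ∈ VMax` and
`λ + u i = min_{(i,j) ∈ E} (r_{ij} + u_j)` for `i ∉ VMax` (i.e. `i ∈ VMin`). -/
def IsErgodicSol {n : ℕ} (E : Finset (Fin n × Fin n)) (VMax : Finset (Fin n))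
    (r : {e : Fin n × Fin n // e ∈ E} → ℝ) (lam : ℝ) (u : Fin n → ℝ) : Prop :=
  ∀ i : Fin n,
    (i ∈ VMax → IsGreatest (outVals E r u i) (lam + u i)) ∧
    (i ∉ VMax → IsLeast (outVals E r u i) (lam + u i))

/-- A policy of player Max. -/
def IsMaxPolicy {n : ℕ} (E : Finset (Fin n × Fin n)) (VMax : Finset (Fin n))
    (σ : {i : Fin n // i ∈ VMax} → Fin n) : Prop :=
  ∀ i, (i.1, σ i) ∈ E

/-- A policy of player Min. -/
def IsMinPolicy {n : ℕ} (E : Finset (Fin n × Fin n)) (VMax : Finset (Fin n))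
    (τ : {i : Fin n // i ∉ VMax} → Fin n) : Prop :=
  ∀ i, (i.1, τ i) ∈ E

/-- The successor map of the subgraph `G^{σ,τ}` in which every vertex keeps only the edge
chosen by the corresponding policy. -/
def combine {n : ℕ} (VMax : Finset (Fin n)) (σ : {i : Fin n // i ∈ VMax} → Fin n)
    (τ : {i : Fin n // i ∉ VMax} → Fin n) : Fin n → Fin n :=
  fun i => if h : i ∈ VMax then σ ⟨i, h⟩ else τ ⟨i, h⟩

/-- The bias `u` induces the pair of policies `(σ, τ)`: at every vertex, the edge chosen by
the policy achieves the maximum (for Max) or minimum (for Min) of `r_{ij} + u_j`. -/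
def Induces {n : ℕ} (E : Finset (Fin n × Fin n)) (VMax : Finset (Fin n))
    (r : {e : Fin n × Fin n // e ∈ E} → ℝ) (u : Fin n → ℝ)
    (σ : {i : Fin n // i ∈ VMax} → Fin n) (τ : {i : Fin n // i ∉ VMax} → Fin n) : Prop :=
  IsMaxPolicy E VMax σ ∧ IsMinPolicy E VMax τ ∧
  (∀ i : {i : Fin n // i ∈ VMax},
      IsGreatest (outVals E r u i.1) (wt E r (i.1, σ i) + u (σ i))) ∧
  (∀ i : {i : Fin n // i ∉ VMax},
      IsLeast (outVals E r u i.1) (wt E r (i.1, τ i) + u (τ i)))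

/-- The mean payoff `g_i` of the play starting at `i` following the successor map `f`. -/
noncomputable def payoff {n : ℕ} (E : Finset (Fin n × Fin n))
    (r : {e : Fin n × Fin n // e ∈ E} → ℝ) (f : Fin n → Fin n) (i : Fin n) : ℝ :=
  Filter.liminf
    (fun N : ℕ => (N : ℝ)⁻¹ * ∑ t ∈ Finset.range N, wt E r (f^[t] i, f^[t + 1] i))
    Filter.atTop

/-- `x` lies on a directed cycle of the functional graph of `f`. -/
def IsPeriodicVertex {n : ℕ} (f : Fin n → Fin n) (x : Fin n) : Prop :=
  ∃ k : ℕ, 0 < k ∧ f^[k] x = x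

/-- The functional graph of `f` has exactly one directed cycle. -/
def HasUniqueCycle {n : ℕ} (f : Fin n → Fin n) : Prop :=
  ∀ x y : Fin n, IsPeriodicVertex f x → IsPeriodicVertex f y → ∃ k : ℕ, f^[k] x = y

/-- `(σ, τ)` is a bias-induced pair of policies of the MPG with weights `r`. -/
def BiasInduced {n : ℕ} (E : Finset (Fin n × Fin n)) (VMax : Finset (Fin n))
    (r : {e : Fin n × Fin n // e ∈ E} → ℝ)
    (σ : {i : Fin n // i ∈ VMax} → Fin n) (τ : {i : Fin n // i ∉ VMax} → Fin n) : Prop :=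
  ∃ lam u, IsErgodicSol E VMax r lam u ∧ Induces E VMax r u σ τ

/-- `(σ, τ) ∈ Ξ`: a pair of policies whose subgraph `G^{σ,τ}` has exactly one cycle. -/
def InXi {n : ℕ} (E : Finset (Fin n × Fin n)) (VMax : Finset (Fin n))
    (σ : {i : Fin n // i ∈ VMax} → Fin n) (τ : {i : Fin n // i ∉ VMax} → Fin n) : Prop :=
  IsMaxPolicy E VMax σ ∧ IsMinPolicy E VMax τ ∧ HasUniqueCycle (combine VMax σ τ)

/-- `P^{σ,τ}`: the set of weight vectors for which `(σ, τ)` is the unique pair of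
bias-induced policies. -/
def Pcell {n : ℕ} (E : Finset (Fin n × Fin n)) (VMax : Finset (Fin n))
    (σ : {i : Fin n // i ∈ VMax} → Fin n) (τ : {i : Fin n // i ∉ VMax} → Fin n) :
    Set ({e : Fin n × Fin n // e ∈ E} → ℝ) :=
  {r | BiasInduced E VMax r σ τ ∧
    ∀ σ' τ', BiasInduced E VMax r σ' τ' → σ' = σ ∧ τ' = τ}

/-- `U := ∪_{(σ,τ) ∈ Ξ} P^{σ,τ}`. -/
def Ucell {n : ℕ} (E : Finset (Fin n × Fin n)) (VMax : Finset (Fin n)) :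
    Set ({e : Fin n × Fin n // e ∈ E} → ℝ) :=
  ⋃ σ, ⋃ τ, ⋃ (_ : InXi E VMax σ τ), Pcell E VMax σ τ

/-- `(λ, u)` solves the zero-player (fixed policies) equation on the functional graph of
`f`. -/
def IsZeroPlayerSol {n : ℕ} (E : Finset (Fin n × Fin n)) (f : Fin n → Fin n)
    (r : {e : Fin n × Fin n // e ∈ E} → ℝ) (lam : ℝ) (u : Fin n → ℝ) : Prop :=
  ∀ i : Fin n, lam + u i = wt E r (i, f i) + u (f i)

/-- `(λ, u)` is the normalized solution of the zero-player equation: additionally `u`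
vanishes at the smallest-index vertex of the cycle. For `(σ,τ) ∈ Ξ`, this characterizes
`(λ^{σ,τ}(r), u^{σ,τ}(r))`. -/
def IsNormalizedSol {n : ℕ} (E : Finset (Fin n × Fin n)) (f : Fin n → Fin n)
    (r : {e : Fin n × Fin n // e ∈ E} → ℝ) (lam : ℝ) (u : Fin n → ℝ) : Prop :=
  IsZeroPlayerSol E f r lam u ∧
  ∃ k : Fin n, IsPeriodicVertex f k ∧ (∀ l, IsPeriodicVertex f l → k ≤ l) ∧ u k = 0

/-- The graph is ergodic: the ergodic equation is solvable for every choice of weights. -/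
def IsErgodicGraph {n : ℕ} (E : Finset (Fin n × Fin n)) (VMax : Finset (Fin n)) : Prop :=
  ∀ r : {e : Fin n × Fin n // e ∈ E} → ℝ, ∃ lam u, IsErgodicSol E VMax r lam u


/-- The threshold `Z_e(r)` in the extended reals: for an edge `e = (i,j)` with `i`
controlled by Min, the infimum of the `x` such that `(x, r₋ₑ) ∈ U` and the unique pair of
bias-induced policies `(σ,τ) ∈ Ξ` of the MPG with weights `(x, r₋ₑ)` satisfies `τ(i) ≠ j`;
for `i` controlled by Max, the corresponding supremum with `σ(i) ≠ j`. -/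
noncomputable def Zedge {n : ℕ} (E : Finset (Fin n × Fin n)) (VMax : Finset (Fin n))
    (e : {e : Fin n × Fin n // e ∈ E}) (r : {e : Fin n × Fin n // e ∈ E} → ℝ) : EReal :=
  if h : e.1.1 ∈ VMax then
    sSup {x : EReal | ∃ x' : ℝ, x = (x' : EReal) ∧
      ∃ (σ : {i : Fin n // i ∈ VMax} → Fin n) (τ : {i : Fin n // i ∉ VMax} → Fin n),
        InXi E VMax σ τ ∧ Function.update r e x' ∈ Pcell E VMax σ τ ∧
        σ ⟨e.1.1, h⟩ ≠ e.1.2}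
  else
    sInf {x : EReal | ∃ x' : ℝ, x = (x' : EReal) ∧
      ∃ (σ : {i : Fin n // i ∈ VMax} → Fin n) (τ : {i : Fin n // i ∉ VMax} → Fin n),
        InXi E VMax σ τ ∧ Function.update r e x' ∈ Pcell E VMax σ τ ∧
        τ ⟨e.1.1, h⟩ ≠ e.1.2}

open Set ProbabilityTheory Function
open scoped ENNReal

theorem exists_gap_compression {ι : Type*} [Fintype ι] (u : ι → ℝ) {D : ℝ} (hD : 0 ≤ D) :
    ∃ v : ι → ℝ, (∀ i, 0 ≤ v i ∧ v i ≤ Fintype.card ι * D) ∧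
      ∀ a b t, -D ≤ t → u a - u b ≤ t → v a - v b ≤ t := by
  set N := ⋃ j, Icc (u j - D) (u j)
  have hN : volume N ≠ ∞ :=
    (Bornology.isBounded_iUnion.2 fun j => Metric.isBounded_Icc _ _).measure_lt_top.ne
  have : IsFiniteMeasure (volume.restrict N) := isFiniteMeasure_restrict.2 hN
  -- `g` is the distribution function of Lebesgue measure on `N`: it grows at unit rate on the
  -- window of length `D` below each `u j` and is constant elsewhere, so it shrinks every gap
  -- between the values of `u` that is longer than `D` down to `D`.
  set g : ℝ → ℝ := fun x => (volume.restrict N).real (Iic x)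
  have g_sub : ∀ {x y}, x ≤ y → g y - g x = volume.real (Ioc x y ∩ N) := by
    intro x y hxy
    rw [← measureReal_restrict_apply measurableSet_Ioc, sub_eq_iff_eq_add', ← measureReal_union
      (Iic_disjoint_Ioc le_rfl) measurableSet_Ioc, Iic_union_Ioc_eq_Iic hxy]
  have sub_le : ∀ {x y}, x ≤ y → g y - g x ≤ y - x := fun {x y} hxy => by
    rw [g_sub hxy]
    calc volume.real (Ioc x y ∩ N) ≤ volume.real (Ioc x y) :=
          measureReal_mono inter_subset_left measure_Ioc_lt_top.ne
      _ = y - x := by simp [Real.volume_real_Ioc, hxy]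
  have le_sub : ∀ {x} j, x ≤ u j → u j - max x (u j - D) ≤ g (u j) - g x := fun {x} j hx => by
    rw [g_sub hx]
    have hsub : Ioc (max x (u j - D)) (u j) ⊆ Ioc x (u j) ∩ N := fun t ht =>
      ⟨⟨(le_max_left _ _).trans_lt ht.1, ht.2⟩,
        mem_iUnion.2 ⟨j, (le_max_right _ _).trans ht.1.le, ht.2⟩⟩
    calc u j - max x (u j - D) = volume.real (Ioc (max x (u j - D)) (u j)) := by
          simp [Real.volume_real_Ioc, hx, hD]
      _ ≤ _ := measureReal_mono hsub
  refine ⟨fun i => g (u i), fun i => ⟨measureReal_nonneg, ?_⟩, fun a b t hDt hab => ?_⟩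
  · calc g (u i) ≤ (volume.restrict N).real univ := measureReal_mono (subset_univ _)
      _ = volume.real N := by rw [measureReal_restrict_apply MeasurableSet.univ, univ_inter]
      _ ≤ ∑ j, volume.real (Icc (u j - D) (u j)) := measureReal_iUnion_fintype_le _
      _ = Fintype.card ι * D := by simp [Real.volume_real_Icc, hD]
  · rcases le_total (u b) (u a) with hba | hab'
    · linarith [sub_le hba]
    · have : max (u a) (u b - D) ≤ t + u b := max_le (by linarith) (by linarith)
      linarith [le_sub b hab']

theorem IsLocallyClosed.isSigmaCompact {X : Type*} [TopologicalSpace X] [LocallyCompactSpace X]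
    [SecondCountableTopology X] {s : Set X} (hs : IsLocallyClosed s) : IsSigmaCompact s :=
  have := hs.locallyCompactSpace
  isSigmaCompact_iff_sigmaCompactSpace.2 inferInstance

theorem IsSigmaCompact.measurableSet {X : Type*} [TopologicalSpace X] [T2Space X]
    [MeasurableSpace X] [OpensMeasurableSpace X] {s : Set X} (hs : IsSigmaCompact s) :
    MeasurableSet s := by
  obtain ⟨K, hK, rfl⟩ := hs
  exact .iUnion fun k => (hK k).isClosed.measurableSet

theorem IsLocallyClosed.measurableSet_image {X Y : Type*} [TopologicalSpace X]
    [LocallyCompactSpace X] [SecondCountableTopology X] [TopologicalSpace Y] [T2Space Y]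
    [MeasurableSpace Y] [OpensMeasurableSpace Y] {s : Set X} (hs : IsLocallyClosed s)
    {f : X → Y} (hf : Continuous f) : MeasurableSet (f '' s) :=
  (hs.isSigmaCompact.image hf).measurableSet

theorem isClosed_image_fst_of_exists_bounded {X Y : Type*} [TopologicalSpace X] [SequentialSpace X]
    [PseudoMetricSpace Y] [ProperSpace Y] {F : Set (X × Y)} (hF : IsClosed F) {B : X → ℝ}
    (hB : Continuous B) (y₀ : Y) (hFB : ∀ x ∈ Prod.fst '' F, ∃ y, (x, y) ∈ F ∧ dist y y₀ ≤ B x) :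
    IsClosed (Prod.fst '' F) := by
  refine IsSeqClosed.isClosed fun xs x hxs hlim => ?_
  choose ys hysF hysB using fun k => hFB (xs k) (hxs k)
  obtain ⟨C, hC⟩ := ((hB.tendsto x).comp hlim).bddAbove_range
  have hys : ∀ k, ys k ∈ Metric.closedBall y₀ C := fun k =>
    (hysB k).trans (hC (mem_range_self k))
  obtain ⟨y, -, ψ, hψ, hy⟩ := (isCompact_closedBall y₀ C).tendsto_subseq hys
  exact ⟨(x, y), hF.mem_of_tendsto ((hlim.comp hψ.tendsto_atTop).prodMk_nhds hy)
    (.of_forall fun k => hysF (ψ k)), rfl⟩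

section UpdateSections

variable {ι : Type*} [DecidableEq ι]

theorem measurableSet_exists_update_mem [Finite ι] (i : ι) {S : Set (ι → ℝ)}
    (hS : IsLocallyClosed S) {O : Set ℝ} (hO : IsOpen O) : MeasurableSet {r | ∃ x ∈ O, update r i x ∈ S} := by
  have hrepr : {r | ∃ x ∈ O, update r i x ∈ S} =
      Prod.fst '' {p : (ι → ℝ) × ℝ | update p.1 i p.2 ∈ S ∧ p.2 ∈ O} := by
    ext r
    simp [and_comm]
  rw [hrepr]
  exact ((hS.preimage (continuous_update i)).inter
    (hO.preimage continuous_snd).isLocallyClosed).measurableSet_image continuous_fst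

variable {P : (ι → ℝ) → Prop}

theorem measurable_sSup_update (i : ι)
    (hP : ∀ O : Set ℝ, IsOpen O → MeasurableSet {r | ∃ x ∈ O, P (update r i x)}) :
    Measurable fun r => sSup {y : EReal | ∃ x : ℝ, y = x ∧ P (update r i x)} := by
  refine measurable_of_Ioi fun c => ?_
  convert hP _ ((isOpen_Ioi (a := c)).preimage continuous_coe_real_ereal) using 1
  ext r
  simp [lt_sSup_iff, and_comm]

theorem measurable_sInf_update (i : ι)
    (hP : ∀ O : Set ℝ, IsOpen O → MeasurableSet {r | ∃ x ∈ O, P (update r i x)}) :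
    Measurable fun r => sInf {y : EReal | ∃ x : ℝ, y = x ∧ P (update r i x)} := by
  refine measurable_of_Iio fun c => ?_
  convert hP _ ((isOpen_Iio (a := c)).preimage continuous_coe_real_ereal) using 1
  ext r
  simp [sInf_lt_iff, and_comm]

end UpdateSections

section Independence

variable {Ω : Type*} [MeasurableSpace Ω] {μ : Measure Ω}

theorem ProbabilityTheory.iIndepFun.indepFun_update {ι β : Type*} [Fintype ι] [DecidableEq ι]
    [MeasurableSpace β] {X : ι → Ω → β} (h : iIndepFun X μ) (hX : ∀ i, Measurable (X i))
    (i : ι) (c : β) : IndepFun (fun ω => update (fun j => X j ω) i c) (X i) μ := by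
  have hi : Disjoint (Finset.univ.erase i) {i} := by simp
  let extend : ({j // j ∈ Finset.univ.erase i} → β) → ι → β := fun v j =>
    if hj : j ∈ Finset.univ.erase i then v ⟨j, hj⟩ else c
  have hextend : Measurable extend := measurable_pi_lambda _ fun j => by
    by_cases hj : j ∈ Finset.univ.erase i <;> simp only [extend, hj, dite_true, dite_false] <;>
      fun_prop
  convert (h.indepFun_finset _ _ hi hX).comp hextend
    (measurable_pi_apply ⟨i, Finset.mem_singleton_self i⟩) using 1
  · ext ω j
    by_cases hj : j = i <;> simp [extend, hj]
  · rfl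

theorem measure_preimage_le_of_indepFun [IsProbabilityMeasure μ] {β γ : Type*}
    [MeasurableSpace β] [MeasurableSpace γ] {Y : Ω → β} {W : Ω → γ} (hY : Measurable Y)
    (hW : Measurable W) (hind : IndepFun Y W μ) {C : Set (β × γ)} (hC : MeasurableSet C)
    {c : ℝ≥0∞} (hc : ∀ y, μ.map W (Prod.mk y ⁻¹' C) ≤ c) :
    μ ((fun ω => (Y ω, W ω)) ⁻¹' C) ≤ c := by
  have := Measure.isProbabilityMeasure_map (μ := μ) hY.aemeasurable
  calc μ ((fun ω => (Y ω, W ω)) ⁻¹' C) = μ.map (fun ω => (Y ω, W ω)) C :=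
        (Measure.map_apply (hY.prodMk hW) hC).symm
    _ = (μ.map Y).prod (μ.map W) C := by
        rw [(indepFun_iff_map_prod_eq_prod_map_map hY.aemeasurable hW.aemeasurable).1 hind]
    _ = ∫⁻ y, μ.map W (Prod.mk y ⁻¹' C) ∂μ.map Y := Measure.prod_apply hC
    _ ≤ ∫⁻ _, c ∂μ.map Y := lintegral_mono hc
    _ = c := by simp

theorem measure_exists_abs_sub_le_of_indepFun [IsProbabilityMeasure μ] {β : Type*}
    [MeasurableSpace β] {Y : Ω → β} {W : Ω → ℝ} (hY : Measurable Y) (hW : Measurable W)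
    (hind : IndepFun Y W μ) {f : ℝ → ℝ≥0∞} (hdens : μ.map W = volume.withDensity f) {φ : ℝ}
    (hf : ∀ y, f y ≤ ENNReal.ofReal φ) {g : β → EReal} (hg : Measurable g) (α : ℝ) :
    μ {ω | ∃ z : ℝ, g (Y ω) = z ∧ |W ω - z| ≤ α} ≤
      ENNReal.ofReal (2 * α) * ENNReal.ofReal φ := by
  set C := {p : β × ℝ | ∃ z : ℝ, g p.1 = z ∧ |p.2 - z| ≤ α}
  have hC : C = {p | g p.1 ≠ ⊥ ∧ g p.1 ≠ ⊤ ∧ |p.2 - (g p.1).toReal| ≤ α} := by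
    ext p
    simp only [C, Set.mem_ofPred_eq]
    generalize g p.1 = a
    induction a using EReal.rec <;> simp
  have hg' : Measurable fun p : β × ℝ => g p.1 := hg.comp measurable_fst
  have hCm : MeasurableSet C := by
    rw [hC]
    exact (hg' (measurableSet_singleton ⊥)).compl.inter
      ((hg' (measurableSet_singleton ⊤)).compl.inter
        (measurableSet_le (measurable_snd.sub hg'.ereal_toReal).abs measurable_const))
  refine measure_preimage_le_of_indepFun hY hW hind hCm fun y => ?_
  rw [hdens]
  by_cases hy : ∃ z : ℝ, g y = z
  · obtain ⟨z, hz⟩ := hy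
    have hsub : Prod.mk y ⁻¹' C ⊆ Icc (z - α) (z + α) := by
      rintro x ⟨z', hz', hx⟩
      rw [hz, EReal.coe_eq_coe_iff] at hz'
      subst hz'
      constructor <;> linarith [abs_le.1 hx]
    calc volume.withDensity f (Prod.mk y ⁻¹' C) ≤ volume.withDensity f (Icc (z - α) (z + α)) :=
          measure_mono hsub
      _ = ∫⁻ x in Icc (z - α) (z + α), f x := withDensity_apply _ measurableSet_Icc
      _ ≤ ∫⁻ _ in Icc (z - α) (z + α), ENNReal.ofReal φ := lintegral_mono hf
      _ = ENNReal.ofReal (2 * α) * ENNReal.ofReal φ := by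
          rw [setLIntegral_const, Real.volume_Icc, mul_comm]
          ring_nf
  · have hempty : Prod.mk y ⁻¹' C = ∅ :=
      eq_empty_of_forall_notMem fun x ⟨z, hz, _⟩ => hy ⟨z, hz⟩
    simp [hempty]

end Independence

section MeanPayoffGame

variable {n : ℕ} {E : Finset (Fin n × Fin n)} {VMax : Finset (Fin n)}

def ErgodicIneqs (E : Finset (Fin n × Fin n)) (VMax : Finset (Fin n))
    (r : {e : Fin n × Fin n // e ∈ E} → ℝ) (lam : ℝ) (u : Fin n → ℝ) : Prop :=
  ∀ i j, (i, j) ∈ E →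
    if i ∈ VMax then wt E r (i, j) + u j ≤ lam + u i else lam + u i ≤ wt E r (i, j) + u j

@[fun_prop]
theorem continuous_wt (p : Fin n × Fin n) :
    Continuous fun r : {e : Fin n × Fin n // e ∈ E} → ℝ => wt E r p := by
  unfold wt
  split_ifs <;> fun_prop

theorem abs_wt_le_norm (r : {e : Fin n × Fin n // e ∈ E} → ℝ) (p : Fin n × Fin n) :
    |wt E r p| ≤ ‖r‖ := by
  unfold wt
  split_ifs with hp
  · exact norm_le_pi_norm r ⟨p, hp⟩
  · simp

theorem abs_le_norm_of_isZeroPlayerSol [Nonempty (Fin n)] {f : Fin n → Fin n}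
    {r : {e : Fin n × Fin n // e ∈ E} → ℝ} {lam : ℝ} {u : Fin n → ℝ}
    (h : IsZeroPlayerSol E f r lam u) : |lam| ≤ ‖r‖ := by
  obtain ⟨imax, himax⟩ := Finite.exists_max u
  obtain ⟨imin, himin⟩ := Finite.exists_min u
  have hmax := h imax
  have hmin := h imin
  have := abs_le.1 (abs_wt_le_norm r (imax, f imax))
  have := abs_le.1 (abs_wt_le_norm r (imin, f imin))
  exact abs_le.2 ⟨by linarith [himin (f imin)], by linarith [himax (f imax)]⟩

theorem combine_mem {σ : {i : Fin n // i ∈ VMax} → Fin n} {τ : {i : Fin n // i ∉ VMax} → Fin n}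
    (hσ : IsMaxPolicy E VMax σ) (hτ : IsMinPolicy E VMax τ) (i : Fin n) :
    (i, combine VMax σ τ i) ∈ E := by
  unfold combine
  split_ifs with hi
  exacts [hσ ⟨i, hi⟩, hτ ⟨i, hi⟩]

theorem isErgodicSol_and_induces_iff {r : {e : Fin n × Fin n // e ∈ E} → ℝ} {lam : ℝ}
    {u : Fin n → ℝ} {σ : {i : Fin n // i ∈ VMax} → Fin n} {τ : {i : Fin n // i ∉ VMax} → Fin n}
    (hσ : IsMaxPolicy E VMax σ) (hτ : IsMinPolicy E VMax τ) :
    IsErgodicSol E VMax r lam u ∧ Induces E VMax r u σ τ ↔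
      ErgodicIneqs E VMax r lam u ∧ IsZeroPlayerSol E (combine VMax σ τ) r lam u := by
  constructor
  · rintro ⟨hsol, -, -, hmax, hmin⟩
    refine ⟨fun i j hij => ?_, fun i => ?_⟩
    · split_ifs with hi
      exacts [((hsol i).1 hi).2 ⟨j, hij, rfl⟩, ((hsol i).2 hi).2 ⟨j, hij, rfl⟩]
    · by_cases hi : i ∈ VMax
      · simpa [combine, hi] using ((hsol i).1 hi).unique (hmax ⟨i, hi⟩)
      · simpa [combine, hi] using ((hsol i).2 hi).unique (hmin ⟨i, hi⟩)
  · rintro ⟨hI, hZ⟩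
    have hsol : IsErgodicSol E VMax r lam u := fun i => by
      have hmem : lam + u i ∈ outVals E r u i := ⟨_, combine_mem hσ hτ i, hZ i⟩
      refine ⟨fun hi => ⟨hmem, ?_⟩, fun hi => ⟨hmem, ?_⟩⟩ <;> rintro _ ⟨j, hij, rfl⟩ <;>
        simpa [hi] using hI i j hij
    refine ⟨hsol, hσ, hτ, fun i => ?_, fun i => ?_⟩
    · simpa [hZ i, combine, i.2] using (hsol i).1 i.2
    · simpa [hZ i, combine, i.2] using (hsol i).2 i.2

theorem exists_bounded_sol [Nonempty (Fin n)] {f : Fin n → Fin n}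
    {r : {e : Fin n × Fin n // e ∈ E} → ℝ} {lam : ℝ} {u : Fin n → ℝ}
    (hI : ErgodicIneqs E VMax r lam u) (hZ : IsZeroPlayerSol E f r lam u) :
    ∃ v, ErgodicIneqs E VMax r lam v ∧ IsZeroPlayerSol E f r lam v ∧ ‖v‖ ≤ n * (2 * ‖r‖) := by
  obtain ⟨v, hvb, hv⟩ := exists_gap_compression u (D := 2 * ‖r‖) (by positivity)
  have hlam := abs_le.1 (abs_le_norm_of_isZeroPlayerSol hZ)
  -- every constraint compares `u j - u i` with `±(lam - w)`, a number of size at most `2 ‖r‖`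
  have le_of_le : ∀ i j (w : ℝ), |w| ≤ ‖r‖ → w + u j ≤ lam + u i → w + v j ≤ lam + v i :=
    fun i j w hw h => by linarith [hv j i (lam - w) (by linarith [abs_le.1 hw]) (by linarith)]
  have ge_of_ge : ∀ i j (w : ℝ), |w| ≤ ‖r‖ → lam + u i ≤ w + u j → lam + v i ≤ w + v j :=
    fun i j w hw h => by linarith [hv i j (w - lam) (by linarith [abs_le.1 hw]) (by linarith)]
  refine ⟨v, fun i j hij => ?_, fun i => ?_, ?_⟩
  · have := hI i j hij
    split_ifs at this ⊢
    exacts [le_of_le i j _ (abs_wt_le_norm r _) this, ge_of_ge i j _ (abs_wt_le_norm r _) this]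
  · exact le_antisymm (ge_of_ge i (f i) _ (abs_wt_le_norm r _) (hZ i).le)
      (le_of_le i (f i) _ (abs_wt_le_norm r _) (hZ i).ge)
  · refine (pi_norm_le_iff_of_nonneg (by positivity)).2 fun i => ?_
    rw [Real.norm_of_nonneg (hvb i).1]
    simpa using (hvb i).2

theorem isClosed_setOf_biasInduced [Nonempty (Fin n)] (σ : {i : Fin n // i ∈ VMax} → Fin n)
    (τ : {i : Fin n // i ∉ VMax} → Fin n) :
    IsClosed {r : {e : Fin n × Fin n // e ∈ E} → ℝ | BiasInduced E VMax r σ τ} := by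
  by_cases hστ : IsMaxPolicy E VMax σ ∧ IsMinPolicy E VMax τ
  swap
  · convert isClosed_empty
    exact eq_empty_of_forall_notMem fun r ⟨_, _, _, hσ, hτ, _⟩ => hστ ⟨hσ, hτ⟩
  set F := {p : ({e : Fin n × Fin n // e ∈ E} → ℝ) × ℝ × (Fin n → ℝ) |
    ErgodicIneqs E VMax p.1 p.2.1 p.2.2 ∧ IsZeroPlayerSol E (combine VMax σ τ) p.1 p.2.1 p.2.2}
  have hF : IsClosed F := by
    simp only [F, ErgodicIneqs, IsZeroPlayerSol, ofPred_and, ofPred_forall]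
    refine .inter (isClosed_iInter fun i => isClosed_iInter fun j => isClosed_iInter fun _ => ?_)
      (isClosed_iInter fun i => isClosed_eq (by fun_prop) (by fun_prop))
    split_ifs <;> exact isClosed_le (by fun_prop) (by fun_prop)
  have hrepr : {r | BiasInduced E VMax r σ τ} = Prod.fst '' F := by
    ext r
    simp [F, BiasInduced, isErgodicSol_and_induces_iff hστ.1 hστ.2]
  rw [hrepr]
  refine isClosed_image_fst_of_exists_bounded hF (B := fun r => max ‖r‖ (n * (2 * ‖r‖)))
    (by fun_prop) 0 ?_
  rintro r ⟨⟨_, lam, u⟩, ⟨hI, hZ⟩, rfl⟩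
  obtain ⟨v, hIv, hZv, hv⟩ := exists_bounded_sol hI hZ
  refine ⟨(lam, v), ⟨hIv, hZv⟩, ?_⟩
  rw [dist_zero_right, norm_prod_le_iff]
  exact ⟨(abs_le_norm_of_isZeroPlayerSol hZ).trans (le_max_left _ _), hv.trans (le_max_right _ _)⟩

theorem isLocallyClosed_pcell [Nonempty (Fin n)] (σ : {i : Fin n // i ∈ VMax} → Fin n)
    (τ : {i : Fin n // i ∉ VMax} → Fin n) : IsLocallyClosed (Pcell E VMax σ τ) := by
  have hrepr : Pcell E VMax σ τ = {r | BiasInduced E VMax r σ τ} ∩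
      (⋃ σ', ⋃ τ', ⋃ (_ : ¬(σ' = σ ∧ τ' = τ)), {r | BiasInduced E VMax r σ' τ'})ᶜ := by
    ext r
    simp only [Pcell, mem_inter_iff, mem_compl_iff, mem_iUnion, not_exists, mem_ofPred_eq]
    exact and_congr_right fun _ => forall₂_congr fun _ _ => not_imp_not.symm
  rw [hrepr]
  exact (isClosed_setOf_biasInduced σ τ).isLocallyClosed.inter (isClosed_iUnion_of_finite
    fun σ' => isClosed_iUnion_of_finite fun τ' => isClosed_iUnion_of_finite fun _ =>
      isClosed_setOf_biasInduced σ' τ').isOpen_compl.isLocallyClosed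

theorem Zedge_update (e : {e : Fin n × Fin n // e ∈ E}) (r : {e : Fin n × Fin n // e ∈ E} → ℝ)
    (t : ℝ) : Zedge E VMax e (update r e t) = Zedge E VMax e r := by
  simp only [Zedge, update_idem]

theorem measurable_Zedge (e : {e : Fin n × Fin n // e ∈ E}) : Measurable (Zedge E VMax e) := by
  have : Nonempty (Fin n) := ⟨e.1.1⟩
  have hcells : ∀ (Q : ({i : Fin n // i ∈ VMax} → Fin n) → ({i : Fin n // i ∉ VMax} → Fin n) → Prop)
      (O : Set ℝ), IsOpen O → MeasurableSet {r | ∃ x ∈ O,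
        ∃ σ τ, InXi E VMax σ τ ∧ update r e x ∈ Pcell E VMax σ τ ∧ Q σ τ} := by
    intro Q O hO
    have hrepr : {r | ∃ x ∈ O, ∃ σ τ, InXi E VMax σ τ ∧ update r e x ∈ Pcell E VMax σ τ ∧ Q σ τ} =
        ⋃ σ, ⋃ τ, ⋃ (_ : InXi E VMax σ τ ∧ Q σ τ),
          {r | ∃ x ∈ O, update r e x ∈ Pcell E VMax σ τ} := by
      ext r
      simp only [mem_iUnion]
      aesop
    rw [hrepr]
    exact .iUnion fun σ => .iUnion fun τ => .iUnion fun _ =>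
      measurableSet_exists_update_mem e (isLocallyClosed_pcell σ τ) hO
  unfold Zedge
  split_ifs with h
  · exact measurable_sSup_update e (P := fun r => ∃ σ τ, InXi E VMax σ τ ∧
      r ∈ Pcell E VMax σ τ ∧ σ ⟨e.1.1, h⟩ ≠ e.1.2) (hcells _)
  · exact measurable_sInf_update e (P := fun r => ∃ σ τ, InXi E VMax σ τ ∧
      r ∈ Pcell E VMax σ τ ∧ τ ⟨e.1.1, h⟩ ≠ e.1.2) (hcells _)

end MeanPayoffGame

open ProbabilityTheory in
theorem stmt13_general (n : ℕ) (E : Finset (Fin n × Fin n)) (VMax : Finset (Fin n))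
    (φ : ℝ)
    (Ω : Type*) [MeasurableSpace Ω] (μ : Measure Ω) [IsProbabilityMeasure μ]
    (X : Ω → {e : Fin n × Fin n // e ∈ E} → ℝ)
    (hmeas : ∀ e, Measurable fun ω => X ω e)
    (hindep : iIndepFun (fun e ω => X ω e) μ)
    (f : {e : Fin n × Fin n // e ∈ E} → ℝ → ENNReal)
    (hdens : ∀ e, Measure.map (fun ω => X ω e) μ = volume.withDensity (f e))
    (hbound : ∀ e y, f e y ≤ ENNReal.ofReal φ)
    (α : ℝ) (hα : 0 < α) :
    μ {ω | ∃ (e : {e : Fin n × Fin n // e ∈ E}) (z : ℝ),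
        Zedge E VMax e (X ω) = (z : EReal) ∧ |X ω e - z| ≤ α} ≤
      ENNReal.ofReal (2 * α * E.card * φ) := by
  have hedge : ∀ e, μ {ω | ∃ z : ℝ, Zedge E VMax e (X ω) = z ∧ |X ω e - z| ≤ α} ≤
      ENNReal.ofReal (2 * α) * ENNReal.ofReal φ := fun e => by
    simpa only [Zedge_update] using measure_exists_abs_sub_le_of_indepFun
      (Y := fun ω => update (X ω) e 0) (measurable_update_left.comp (measurable_pi_lambda _ hmeas))
      (hmeas e) (hindep.indepFun_update hmeas e 0) (hdens e) (hbound e)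
      (measurable_Zedge (VMax := VMax) e) α
  calc μ {ω | ∃ e, ∃ z : ℝ, Zedge E VMax e (X ω) = z ∧ |X ω e - z| ≤ α}
      ≤ ∑ e, μ {ω | ∃ z : ℝ, Zedge E VMax e (X ω) = z ∧ |X ω e - z| ≤ α} := by
        rw [ofPred_exists]
        exact measure_iUnion_fintype_le μ _
    _ ≤ ∑ _e : {e // e ∈ E}, ENNReal.ofReal (2 * α) * ENNReal.ofReal φ :=
        Finset.sum_le_sum fun e _ => hedge e
    _ = ENNReal.ofReal (2 * α * E.card * φ) := by
        rw [Finset.sum_const, Finset.card_univ, Fintype.card_coe, nsmul_eq_mul,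
          ← ENNReal.ofReal_mul (by positivity), ← ENNReal.ofReal_natCast,
          ← ENNReal.ofReal_mul (by positivity)]
        ring_nf

open ProbabilityTheory in
/-- In the random model over an ergodic graph, for every `α > 0`, the
probability that some finite threshold `Z_e(r)` is within distance `α` of the weight `r_e`
is at most `2·α·m·φ`. -/
theorem stmt13 (n : ℕ) (E : Finset (Fin n × Fin n)) (VMax : Finset (Fin n))
    (hout : ∀ i : Fin n, ∃ j : Fin n, (i, j) ∈ E)
    (herg : IsErgodicGraph E VMax)
    (φ : ℝ) (hφ : 0 < φ)
    (Ω : Type*) [MeasurableSpace Ω] (μ : Measure Ω) [IsProbabilityMeasure μ]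
    (X : Ω → {e : Fin n × Fin n // e ∈ E} → ℝ)
    (hmeas : ∀ e, Measurable fun ω => X ω e)
    (hindep : iIndepFun (fun e ω => X ω e) μ)
    (f : {e : Fin n × Fin n // e ∈ E} → ℝ → ENNReal)
    (hdens : ∀ e, Measure.map (fun ω => X ω e) μ = volume.withDensity (f e))
    (hbound : ∀ e y, f e y ≤ ENNReal.ofReal φ)
    (α : ℝ) (hα : 0 < α) :
    μ {ω | ∃ (e : {e : Fin n × Fin n // e ∈ E}) (z : ℝ),
        Zedge E VMax e (X ω) = (z : EReal) ∧ |X ω e - z| ≤ α} ≤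
      ENNReal.ofReal (2 * α * E.card * φ) :=
  stmt13_general n E VMax φ Ω μ X hmeas hindep f hdens hbound α hα
end

section
/- Suppose the graph G is ergodic and r ∈ P^{σ,τ} for some (σ,τ) ∈ Ξ. Then for every edge (i,j) ∈ E that is not used by (σ,τ) (i.e., j ≠ σ(i) when i ∈ V_Max and j ≠ τ(i) when i ∈ V_Min), one has Z_{ij}(r) = λ^{σ,τ}(r) + (u^{σ,τ}(r))_i − (u^{σ,τ}(r))_j. -/
/-!
Write `c(i,j) = r_ij + u_j − (λ + u_i)` for the reduced cost of an edge with respect to a bias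
`(λ, u)`. A successor map is bias-induced iff some `(λ, u)` gives its edges reduced cost `0` and
no edge a gain for the owner of its tail (`c ≤ 0` at Max, `c ≥ 0` at Min). On a policy graph
with a unique cycle the zero-player equation fixes `λ`, and `u` up to a constant, hence the
reduced costs; and `(σ, τ)` is then the only bias-induced pair exactly when every unused edge is
a strict loss for its owner.

Changing the weight of the unused edge `e = (i,j)` to `x` only changes its own reduced cost, to
`x − (λ + u_i − u_j)`. While this stays a strict loss, the weights stay in `P^{σ,τ}`. Conversely,
if the new weights lie in a cell whose policies avoid `e`, pushing `x` further to the losing side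
keeps these policies bias-induced and eventually reaches `P^{σ,τ}`; so they are `(σ, τ)`, and
their reduced costs show that `e` is no gain at weight `x`. Hence `λ + u_i − u_j` is the
threshold `Z_e(r)`.
-/

open MeasureTheory

section ReducedCosts

variable {n : ℕ}

/-- Multiplying by `ownerSign` turns Min's inequalities into Max's: `ownerSign VMax i * c ≤ 0`
says that `c` is no gain for the owner of `i`. -/
def ownerSign (VMax : Finset (Fin n)) (v : Fin n) : ℝ :=
  if v ∈ VMax then 1 else -1

noncomputable def reducedCost (E : Finset (Fin n × Fin n)) (r : {e : Fin n × Fin n // e ∈ E} → ℝ)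
    (lam : ℝ) (u : Fin n → ℝ) (p : Fin n × Fin n) : ℝ :=
  wt E r p + u p.2 - (lam + u p.1)

def NoImprovingEdge (E : Finset (Fin n × Fin n)) (VMax : Finset (Fin n))
    (r : {e : Fin n × Fin n // e ∈ E} → ℝ) (lam : ℝ) (u : Fin n → ℝ) : Prop :=
  ∀ p ∈ E, ownerSign VMax p.1 * reducedCost E r lam u p ≤ 0

def UnusedEdgesStrictlyWorse (E : Finset (Fin n × Fin n)) (VMax : Finset (Fin n))
    (f : Fin n → Fin n) (r : {e : Fin n × Fin n // e ∈ E} → ℝ) (lam : ℝ) (u : Fin n → ℝ) :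
    Prop :=
  ∀ p ∈ E, p.2 ≠ f p.1 → ownerSign VMax p.1 * reducedCost E r lam u p < 0

def IsBiasInducedMap (E : Finset (Fin n × Fin n)) (VMax : Finset (Fin n))
    (r : {e : Fin n × Fin n // e ∈ E} → ℝ) (f : Fin n → Fin n) : Prop :=
  (∀ v, (v, f v) ∈ E) ∧
    ∃ lam u, IsZeroPlayerSol E f r lam u ∧ NoImprovingEdge E VMax r lam u

variable {E : Finset (Fin n × Fin n)} {VMax : Finset (Fin n)}
  {r : {e : Fin n × Fin n // e ∈ E} → ℝ} {lam lam' : ℝ} {u u' : Fin n → ℝ}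
  {f f' : Fin n → Fin n}

theorem wt_update (e : {e : Fin n × Fin n // e ∈ E}) (x : ℝ) (p : Fin n × Fin n) :
    wt E (Function.update r e x) p = if p = e.1 then x else wt E r p := by
  unfold wt
  split_ifs with hp hpe hpe <;> try subst hpe
  · simp
  · rw [Function.update_of_ne (fun h => hpe (congrArg Subtype.val h))]
  · exact absurd e.2 hp
  · rfl

theorem reducedCost_update (e : {e : Fin n × Fin n // e ∈ E}) (x : ℝ) (p : Fin n × Fin n) :
    reducedCost E (Function.update r e x) lam u p =
      if p = e.1 then x + u e.1.2 - (lam + u e.1.1) else reducedCost E r lam u p := by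
  unfold reducedCost
  rw [wt_update]
  split_ifs with hp
  · subst hp; rfl
  · rfl

theorem isZeroPlayerSol_iff :
    IsZeroPlayerSol E f r lam u ↔ ∀ v, reducedCost E r lam u (v, f v) = 0 :=
  forall_congr' fun v => by unfold reducedCost; constructor <;> intro h <;> linarith

theorem IsZeroPlayerSol.update (h : IsZeroPlayerSol E f r lam u)
    {e : {e : Fin n × Fin n // e ∈ E}} (he : f e.1.1 ≠ e.1.2) (x : ℝ) :
    IsZeroPlayerSol E f (Function.update r e x) lam u := by
  refine isZeroPlayerSol_iff.2 fun v => ?_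
  rw [reducedCost_update, if_neg fun hv => he (by rw [← hv])]
  exact isZeroPlayerSol_iff.1 h v

theorem NoImprovingEdge.update (h : NoImprovingEdge E VMax r lam u)
    {e : {e : Fin n × Fin n // e ∈ E}} {y : ℝ} (hy : ownerSign VMax e.1.1 * (y - r e) ≤ 0) :
    NoImprovingEdge E VMax (Function.update r e y) lam u := by
  intro p hp
  rw [reducedCost_update]
  split_ifs with hpe
  · subst hpe
    have he := h e.1 e.2
    have hwt : wt E r e.1 = r e := dif_pos e.2
    unfold reducedCost at he
    rw [hwt] at he
    linarith [mul_add (ownerSign VMax e.1.1) (y - r e) (r e + u e.1.2 - (lam + u e.1.1))]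
  · exact h p hp

theorem UnusedEdgesStrictlyWorse.noImprovingEdge (hs : UnusedEdgesStrictlyWorse E VMax f r lam u)
    (hzp : IsZeroPlayerSol E f r lam u) : NoImprovingEdge E VMax r lam u := by
  intro p hp
  by_cases hpf : p.2 = f p.1
  · rw [show p = (p.1, f p.1) from Prod.ext rfl hpf, isZeroPlayerSol_iff.1 hzp, mul_zero]
  · exact (hs p hp hpf).le

end ReducedCosts

section Policies

variable {n : ℕ} {E : Finset (Fin n × Fin n)} {VMax : Finset (Fin n)}
  {r : {e : Fin n × Fin n // e ∈ E} → ℝ} {lam : ℝ} {u : Fin n → ℝ}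
  {σ : {i : Fin n // i ∈ VMax} → Fin n} {τ : {i : Fin n // i ∉ VMax} → Fin n}

theorem combine_mem_iff :
    (∀ v, (v, combine VMax σ τ v) ∈ E) ↔ IsMaxPolicy E VMax σ ∧ IsMinPolicy E VMax τ := by
  refine ⟨fun h => ⟨fun i => ?_, fun i => ?_⟩, fun ⟨hσ, hτ⟩ v => ?_⟩
  · simpa [combine, i.2] using h i
  · simpa [combine, i.2] using h i
  · unfold combine
    split_ifs with hv
    exacts [hσ ⟨v, hv⟩, hτ ⟨v, hv⟩]

theorem combine_restrict (f : Fin n → Fin n) :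
    combine VMax (fun i => f i.1) (fun i => f i.1) = f := by
  funext v
  unfold combine
  split_ifs <;> rfl

theorem combine_injective {σ' : {i : Fin n // i ∈ VMax} → Fin n}
    {τ' : {i : Fin n // i ∉ VMax} → Fin n} (h : combine VMax σ' τ' = combine VMax σ τ) :
    σ' = σ ∧ τ' = τ :=
  ⟨funext fun i => by simpa [combine, i.2] using congrFun h i,
    funext fun i => by simpa [combine, i.2] using congrFun h i⟩

theorem IsErgodicSol.noImprovingEdge (h : IsErgodicSol E VMax r lam u) :
    NoImprovingEdge E VMax r lam u := by
  intro p hp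
  have hle := fun hv => ((h p.1).1 hv).2 ⟨p.2, hp, rfl⟩
  have hge := fun hv => ((h p.1).2 hv).2 ⟨p.2, hp, rfl⟩
  unfold ownerSign reducedCost
  split_ifs with hv
  · linarith [hle hv]
  · linarith [hge hv]

theorem isErgodicSol_of_isZeroPlayerSol {f : Fin n → Fin n} (hf : ∀ v, (v, f v) ∈ E)
    (hzp : IsZeroPlayerSol E f r lam u) (hopt : NoImprovingEdge E VMax r lam u) :
    IsErgodicSol E VMax r lam u := by
  refine fun v => ⟨fun hv => ⟨⟨f v, hf v, hzp v⟩, ?_⟩, fun hv => ⟨⟨f v, hf v, hzp v⟩, ?_⟩⟩ <;>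
    rintro _ ⟨j, hj, rfl⟩ <;>
    have := hopt (v, j) hj <;>
    simp only [ownerSign, reducedCost, hv, if_true, if_false] at this <;>
    linarith

theorem induces_iff (hsol : IsErgodicSol E VMax r lam u) :
    Induces E VMax r u σ τ ↔
      IsMaxPolicy E VMax σ ∧ IsMinPolicy E VMax τ ∧
        IsZeroPlayerSol E (combine VMax σ τ) r lam u := by
  refine and_congr_right fun _ => and_congr_right fun _ =>
    ⟨fun ⟨hmax, hmin⟩ v => ?_, fun h => ⟨fun i => ?_, fun i => ?_⟩⟩
  · by_cases hv : v ∈ VMax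
    · simpa [combine, hv] using ((hsol v).1 hv).unique (hmax ⟨v, hv⟩)
    · simpa [combine, hv] using ((hsol v).2 hv).unique (hmin ⟨v, hv⟩)
  · have hi := h i.1
    simp only [combine, dif_pos i.2] at hi
    exact hi ▸ (hsol i.1).1 i.2
  · have hi := h i.1
    simp only [combine, dif_neg i.2] at hi
    exact hi ▸ (hsol i.1).2 i.2

theorem biasInduced_iff :
    BiasInduced E VMax r σ τ ↔ IsBiasInducedMap E VMax r (combine VMax σ τ) := by
  constructor
  · rintro ⟨lam, u, hsol, hind⟩
    obtain ⟨hσ, hτ, hzp⟩ := (induces_iff hsol).1 hind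
    exact ⟨combine_mem_iff.2 ⟨hσ, hτ⟩, lam, u, hzp, hsol.noImprovingEdge⟩
  · rintro ⟨hf, lam, u, hzp, hopt⟩
    have hsol := isErgodicSol_of_isZeroPlayerSol hf hzp hopt
    obtain ⟨hσ, hτ⟩ := combine_mem_iff.1 hf
    exact ⟨lam, u, hsol, (induces_iff hsol).2 ⟨hσ, hτ, hzp⟩⟩

theorem mem_Pcell_iff :
    r ∈ Pcell E VMax σ τ ↔
      IsBiasInducedMap E VMax r (combine VMax σ τ) ∧
        ∀ f, IsBiasInducedMap E VMax r f → f = combine VMax σ τ := by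
  refine ⟨fun ⟨hbi, huniq⟩ => ⟨biasInduced_iff.1 hbi, fun f hf => ?_⟩,
    fun ⟨hbi, huniq⟩ => ⟨biasInduced_iff.2 hbi, fun σ' τ' h' => ?_⟩⟩
  · rw [← combine_restrict (VMax := VMax) f] at hf ⊢
    obtain ⟨hσ, hτ⟩ := huniq _ _ (biasInduced_iff.2 hf)
    rw [hσ, hτ]
  · exact combine_injective (huniq _ (biasInduced_iff.1 h'))

end Policies

section UniqueCycle

variable {n : ℕ} {f : Fin n → Fin n}

theorem exists_isPeriodicVertex_iterate (f : Fin n → Fin n) (x : Fin n) :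
    ∃ k, IsPeriodicVertex f (f^[k] x) := by
  obtain ⟨a, b, hab, heq⟩ := Finite.exists_ne_map_eq_of_infinite fun m : ℕ => f^[m] x
  rcases lt_or_gt_of_ne hab with hlt | hlt
  · refine ⟨a, b - a, by omega, ?_⟩
    rw [← Function.iterate_add_apply, Nat.sub_add_cancel hlt.le]
    exact heq.symm
  · refine ⟨b, a - b, by omega, ?_⟩
    rw [← Function.iterate_add_apply, Nat.sub_add_cancel hlt.le]
    exact heq

theorem HasUniqueCycle.inter_nonempty (hf : HasUniqueCycle f) {S T : Set (Fin n)}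
    (hS : Set.MapsTo f S S) (hT : Set.MapsTo f T T) {a b : Fin n} (ha : a ∈ S) (hb : b ∈ T) :
    (S ∩ T).Nonempty := by
  obtain ⟨k, hk⟩ := exists_isPeriodicVertex_iterate f a
  obtain ⟨l, hl⟩ := exists_isPeriodicVertex_iterate f b
  obtain ⟨t, ht⟩ := hf _ _ hk hl
  refine ⟨f^[l] b, ?_, hT.iterate l hb⟩
  rw [← ht, ← Function.iterate_add_apply]
  exact hS.iterate _ ha

theorem HasUniqueCycle.apply_eq_apply (hf : HasUniqueCycle f) (d : Fin n → ℝ)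
    (hmax : Set.MapsTo f {v | ∀ w, d w ≤ d v} {v | ∀ w, d w ≤ d v})
    (hmin : Set.MapsTo f {v | ∀ w, d v ≤ d w} {v | ∀ w, d v ≤ d w}) (a b : Fin n) :
    d a = d b := by
  have : Nonempty (Fin n) := ⟨a⟩
  obtain ⟨vmax, hvmax⟩ := Finite.exists_max d
  obtain ⟨vmin, hvmin⟩ := Finite.exists_min d
  obtain ⟨c, hcmax, hcmin⟩ := hf.inter_nonempty hmax hmin hvmax hvmin
  exact le_antisymm ((hcmax a).trans (hcmin b)) ((hcmax b).trans (hcmin a))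

end UniqueCycle

theorem nonpos_of_forall_add_le_comp {α : Type*} [Finite α] [Nonempty α] {d : α → ℝ}
    {g : α → α} {c : ℝ} (h : ∀ v, c + d v ≤ d (g v)) : c ≤ 0 := by
  obtain ⟨v, hv⟩ := Finite.exists_max d
  linarith [h v, hv (g v)]

section Values

variable {n : ℕ} {E : Finset (Fin n × Fin n)} {VMax : Finset (Fin n)}
  {r : {e : Fin n × Fin n // e ∈ E} → ℝ} {lam lam' : ℝ} {u u' : Fin n → ℝ}
  {f f' : Fin n → Fin n}

theorem IsZeroPlayerSol.lam_eq [Nonempty (Fin n)] (h : IsZeroPlayerSol E f r lam u)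
    (h' : IsZeroPlayerSol E f r lam' u') : lam' = lam := by
  have hle : lam' - lam ≤ 0 := nonpos_of_forall_add_le_comp (d := u' - u) (g := f) fun v => by
    simp only [Pi.sub_apply]; linarith [h v, h' v]
  have hge : lam - lam' ≤ 0 := nonpos_of_forall_add_le_comp (d := u - u') (g := f) fun v => by
    simp only [Pi.sub_apply]; linarith [h v, h' v]
  linarith

theorem IsZeroPlayerSol.reducedCost_eq (hf : HasUniqueCycle f) (h : IsZeroPlayerSol E f r lam u)
    (h' : IsZeroPlayerSol E f r lam' u') : reducedCost E r lam' u' = reducedCost E r lam u := by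
  funext p
  have : Nonempty (Fin n) := ⟨p.1⟩
  obtain rfl := h.lam_eq h'
  have hd : ∀ v, (u' - u) (f v) = (u' - u) v := fun v => by
    simp only [Pi.sub_apply]; linarith [h v, h' v]
  have hconst := hf.apply_eq_apply (u' - u) (fun v hv w => hd v ▸ hv w)
    (fun v hv w => hd v ▸ hv w) p.1 p.2
  simp only [Pi.sub_apply] at hconst
  unfold reducedCost
  linarith

theorem NoImprovingEdge.lam_le [Nonempty (Fin n)] (hopt : NoImprovingEdge E VMax r lam u)
    (hzp : IsZeroPlayerSol E f r lam u) (hf : ∀ v, (v, f v) ∈ E)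
    (hopt' : NoImprovingEdge E VMax r lam' u') (hzp' : IsZeroPlayerSol E f' r lam' u')
    (hf' : ∀ v, (v, f' v) ∈ E) : lam' ≤ lam := by
  suffices ∀ v, (lam' - lam) + (u' - u) v ≤ (u' - u) (if v ∈ VMax then f' v else f v) by
    linarith [nonpos_of_forall_add_le_comp this]
  intro v
  have h1 := hopt (v, f' v) (hf' v)
  have h2 := hopt' (v, f v) (hf v)
  simp only [ownerSign, reducedCost, Pi.sub_apply] at h1 h2 ⊢
  split_ifs at h1 h2 ⊢ <;> linarith [hzp v, hzp' v]

end Values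

section Cells

variable {n : ℕ} {E : Finset (Fin n × Fin n)} {VMax : Finset (Fin n)}
  {r : {e : Fin n × Fin n // e ∈ E} → ℝ} {lam : ℝ} {u : Fin n → ℝ} {f f' : Fin n → Fin n}
  {σ : {i : Fin n // i ∈ VMax} → Fin n} {τ : {i : Fin n // i ∉ VMax} → Fin n}

theorem mapsTo_argmax_and_argmin {d : Fin n → ℝ}
    (hnew : ∀ v, ownerSign VMax v * (d v - d (f' v)) ≤ 0)
    (hnew_strict : ∀ v, f' v ≠ f v → ownerSign VMax v * (d v - d (f' v)) < 0)
    (hold : ∀ v, ownerSign VMax v * (d (f v) - d v) ≤ 0) :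
    Set.MapsTo f {v | ∀ w, d w ≤ d v} {v | ∀ w, d w ≤ d v} ∧
      Set.MapsTo f {v | ∀ w, d v ≤ d w} {v | ∀ w, d v ≤ d w} := by
  refine ⟨fun v hv w => ?_, fun v hv w => ?_⟩ <;>
    have h1 := hnew v <;> have h2 := hnew_strict v <;> have h3 := hold v <;>
    simp only [Set.mem_ofPred_eq] at hv ⊢ <;>
    by_cases hvM : v ∈ VMax <;> simp only [ownerSign, hvM, if_true, if_false] at h1 h2 h3 <;>
    by_cases hvf : f' v = f v
  all_goals first
    | rw [hvf] at h1; linarith [hv w]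
    | linarith [h2 hvf, hv (f' v)]
    | linarith [hv w]

/-- With `d := u' - u` for another bias-induced solution `(λ', u')`, one first gets `λ' = λ`;
then the maximum and minimum sets of `d` are forward invariant under `f`, so `d` is constant and
`(λ, u')` has the reduced costs of `(λ, u)`, which vanish only on the edges of `f`. -/
theorem UnusedEdgesStrictlyWorse.eq_of_isBiasInducedMap [Nonempty (Fin n)]
    (hs : UnusedEdgesStrictlyWorse E VMax f r lam u) (hf : HasUniqueCycle f)
    (hfE : ∀ v, (v, f v) ∈ E) (hzp : IsZeroPlayerSol E f r lam u)
    (h' : IsBiasInducedMap E VMax r f') : f' = f := by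
  obtain ⟨hf'E, lam', u', hzp', hopt'⟩ := h'
  have hopt := hs.noImprovingEdge hzp
  obtain rfl : lam = lam' :=
    le_antisymm (hopt'.lam_le hzp' hf'E hopt hzp hfE) (hopt.lam_le hzp hfE hopt' hzp' hf'E)
  set d := u' - u with hd
  have hrc_new : ∀ v, reducedCost E r lam u (v, f' v) = d v - d (f' v) := fun v => by
    simp only [reducedCost, hd, Pi.sub_apply]; linarith [hzp' v]
  have hrc_old : ∀ v, reducedCost E r lam u' (v, f v) = d (f v) - d v := fun v => by
    simp only [reducedCost, hd, Pi.sub_apply]; linarith [hzp v]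
  have hnew_strict := fun v => hrc_new v ▸ hs (v, f' v) (hf'E v)
  obtain ⟨hmax, hmin⟩ := mapsTo_argmax_and_argmin (d := d)
    (fun v => hrc_new v ▸ hopt (v, f' v) (hf'E v)) hnew_strict
    (fun v => hrc_old v ▸ hopt' (v, f v) (hfE v))
  have hconst := hf.apply_eq_apply d hmax hmin
  funext v
  by_contra hv
  simpa [hconst v (f' v)] using hnew_strict v hv

theorem UnusedEdgesStrictlyWorse.mem_Pcell (hXi : InXi E VMax σ τ)
    (hzp : IsZeroPlayerSol E (combine VMax σ τ) r lam u)
    (hs : UnusedEdgesStrictlyWorse E VMax (combine VMax σ τ) r lam u) :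
    r ∈ Pcell E VMax σ τ := by
  have hfE := combine_mem_iff.2 ⟨hXi.1, hXi.2.1⟩
  refine mem_Pcell_iff.2 ⟨⟨hfE, lam, u, hzp, hs.noImprovingEdge hzp⟩, fun f' hf' => ?_⟩
  rcases isEmpty_or_nonempty (Fin n) with hn | hn
  · exact funext hn.elim
  · exact hs.eq_of_isBiasInducedMap hXi.2.2 hfE hzp hf'

/-- An unused edge of reduced cost `0` could replace the policy's edge at its tail, giving a
second bias-induced map. -/
theorem unusedEdgesStrictlyWorse_of_mem_Pcell (hf : HasUniqueCycle (combine VMax σ τ))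
    (hr : r ∈ Pcell E VMax σ τ) (hzp : IsZeroPlayerSol E (combine VMax σ τ) r lam u) :
    UnusedEdgesStrictlyWorse E VMax (combine VMax σ τ) r lam u := by
  obtain ⟨⟨hfE, lam₀, u₀, hzp₀, hopt₀⟩, huniq⟩ := mem_Pcell_iff.1 hr
  have hopt : NoImprovingEdge E VMax r lam u := by
    unfold NoImprovingEdge
    rwa [hzp₀.reducedCost_eq hf hzp]
  intro p hp hpf
  refine (hopt p hp).lt_of_ne fun hzero => hpf ?_
  have hrc : reducedCost E r lam u p = 0 := by
    unfold ownerSign at hzero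
    split_ifs at hzero <;> linarith
  set f₁ := Function.update (combine VMax σ τ) p.1 p.2
  have hf₁ : IsBiasInducedMap E VMax r f₁ := by
    refine ⟨fun v => ?_, lam, u, isZeroPlayerSol_iff.2 fun v => ?_, hopt⟩ <;>
      simp only [f₁, Function.update_apply] <;> split_ifs with hv
    · exact hv ▸ hp
    · exact hfE v
    · exact hv ▸ hrc
    · exact isZeroPlayerSol_iff.1 hzp v
  rw [← huniq f₁ hf₁]
  simp [f₁]

end Cells

section Threshold

variable {n : ℕ} {E : Finset (Fin n × Fin n)} {VMax : Finset (Fin n)}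
  {r : {e : Fin n × Fin n // e ∈ E} → ℝ} {lam : ℝ} {u : Fin n → ℝ}
  {σ : {i : Fin n // i ∈ VMax} → Fin n} {τ : {i : Fin n // i ∉ VMax} → Fin n}
  {e : {e : Fin n × Fin n // e ∈ E}}

theorem update_mem_Pcell (hXi : InXi E VMax σ τ)
    (hzp : IsZeroPlayerSol E (combine VMax σ τ) r lam u)
    (hs : UnusedEdgesStrictlyWorse E VMax (combine VMax σ τ) r lam u)
    (he : combine VMax σ τ e.1.1 ≠ e.1.2) {x : ℝ}
    (hx : ownerSign VMax e.1.1 * (x - (lam + u e.1.1 - u e.1.2)) < 0) :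
    Function.update r e x ∈ Pcell E VMax σ τ := by
  refine UnusedEdgesStrictlyWorse.mem_Pcell hXi (hzp.update he x) fun p hp hpf => ?_
  rw [reducedCost_update]
  split_ifs with hpe
  · subst hpe
    convert hx using 2
    ring
  · exact hs p hp hpf

theorem exists_ownerSign_mul_neg (VMax : Finset (Fin n)) (v : Fin n) (a b : ℝ) :
    ∃ y, ownerSign VMax v * (y - a) < 0 ∧ ownerSign VMax v * (y - b) ≤ 0 := by
  unfold ownerSign
  split_ifs
  · exact ⟨min (a - 1) b, by linarith [min_le_left (a - 1) b], by linarith [min_le_right (a - 1) b]⟩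
  · exact ⟨max (a + 1) b, by linarith [le_max_left (a + 1) b], by linarith [le_max_right (a + 1) b]⟩

theorem ownerSign_mul_nonpos_of_update_mem_Pcell (hf : HasUniqueCycle (combine VMax σ τ))
    (hzp : IsZeroPlayerSol E (combine VMax σ τ) r lam u)
    (he : combine VMax σ τ e.1.1 ≠ e.1.2)
    (hcell : ∀ y, ownerSign VMax e.1.1 * (y - (lam + u e.1.1 - u e.1.2)) < 0 →
      Function.update r e y ∈ Pcell E VMax σ τ)
    {x : ℝ} {σ' : {i : Fin n // i ∈ VMax} → Fin n} {τ' : {i : Fin n // i ∉ VMax} → Fin n}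
    (hx : Function.update r e x ∈ Pcell E VMax σ' τ') (he' : combine VMax σ' τ' e.1.1 ≠ e.1.2) :
    ownerSign VMax e.1.1 * (x - (lam + u e.1.1 - u e.1.2)) ≤ 0 := by
  obtain ⟨⟨hf'E, lam', u', hzp', hopt'⟩, -⟩ := mem_Pcell_iff.1 hx
  obtain ⟨y, hyB, hyx⟩ := exists_ownerSign_mul_neg VMax e.1.1 (lam + u e.1.1 - u e.1.2) x
  have hbi : IsBiasInducedMap E VMax (Function.update r e y) (combine VMax σ' τ') := by
    refine ⟨hf'E, lam', u', ?_, ?_⟩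
    · simpa using hzp'.update he' y
    · simpa using hopt'.update (e := e) (y := y) (by simpa using hyx)
  rw [(mem_Pcell_iff.1 (hcell y hyB)).2 _ hbi] at hzp'
  have hopt := hopt' e.1 e.2
  rw [(hzp.update he x).reducedCost_eq hf hzp', reducedCost_update, if_pos rfl] at hopt
  convert hopt using 2
  ring

theorem EReal.sSup_eq_of_forall_coe_lt_mem {S : Set EReal} {b : ℝ} (hle : ∀ a ∈ S, a ≤ b)
    (hmem : ∀ x : ℝ, x < b → (x : EReal) ∈ S) : sSup S = b :=
  le_antisymm (sSup_le hle)
    (EReal.ge_of_forall_gt_iff_ge.1 fun x hx => le_sSup (hmem x (EReal.coe_lt_coe_iff.1 hx)))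

theorem EReal.sInf_eq_of_forall_lt_coe_mem {S : Set EReal} {b : ℝ} (hle : ∀ a ∈ S, b ≤ a)
    (hmem : ∀ x : ℝ, b < x → (x : EReal) ∈ S) : sInf S = b :=
  le_antisymm
    (EReal.le_of_forall_lt_iff_le.1 fun x hx => sInf_le (hmem x (EReal.coe_lt_coe_iff.1 hx)))
    (le_sInf hle)

end Threshold

theorem stmt14_general (n : ℕ) (E : Finset (Fin n × Fin n)) (VMax : Finset (Fin n))
    (σ : {i : Fin n // i ∈ VMax} → Fin n) (τ : {i : Fin n // i ∉ VMax} → Fin n)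
    (hXi : InXi E VMax σ τ)
    (r : {e : Fin n × Fin n // e ∈ E} → ℝ) (hr : r ∈ Pcell E VMax σ τ)
    (lam : ℝ) (u : Fin n → ℝ)
    (hnorm : IsNormalizedSol E (combine VMax σ τ) r lam u) :
    ∀ e : {e : Fin n × Fin n // e ∈ E},
      (∀ h : e.1.1 ∈ VMax, σ ⟨e.1.1, h⟩ ≠ e.1.2) →
      (∀ h : e.1.1 ∉ VMax, τ ⟨e.1.1, h⟩ ≠ e.1.2) →
      Zedge E VMax e r = ((lam + u e.1.1 - u e.1.2 : ℝ) : EReal) := by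
  intro e hMax hMin
  have he : combine VMax σ τ e.1.1 ≠ e.1.2 := by
    unfold combine
    split_ifs with h
    exacts [hMax h, hMin h]
  have hs := unusedEdgesStrictlyWorse_of_mem_Pcell hXi.2.2 hr hnorm.1
  have hcell := fun y => update_mem_Pcell (x := y) hXi hnorm.1 hs he
  have hbound := fun x σ' τ' => ownerSign_mul_nonpos_of_update_mem_Pcell (x := x) (σ' := σ')
    (τ' := τ') hXi.2.2 hnorm.1 he hcell
  unfold Zedge
  split_ifs with h <;> simp only [ownerSign, h, if_true, if_false] at hcell hbound
  · refine EReal.sSup_eq_of_forall_coe_lt_mem ?_ fun x hx =>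
      ⟨x, rfl, σ, τ, hXi, hcell x (by linarith), hMax h⟩
    rintro _ ⟨x, rfl, σ', τ', -, hx, hne⟩
    have := hbound x σ' τ' hx (by simpa [combine, h] using hne)
    exact EReal.coe_le_coe_iff.2 (by linarith)
  · refine EReal.sInf_eq_of_forall_lt_coe_mem ?_ fun x hx =>
      ⟨x, rfl, σ, τ, hXi, hcell x (by linarith), hMin h⟩
    rintro _ ⟨x, rfl, σ', τ', -, hx, hne⟩
    have := hbound x σ' τ' hx (by simpa [combine, h] using hne)
    exact EReal.coe_le_coe_iff.2 (by linarith)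

/-- If `r ∈ P^{σ,τ}` with `(σ,τ) ∈ Ξ`, then for every edge `e = (i,j)`
not used by `(σ,τ)` one has `Z_e(r) = λ^{σ,τ}(r) + u^{σ,τ}(r)_i − u^{σ,τ}(r)_j`, where
`(lam, u)` is the normalized solution characterizing `(λ^{σ,τ}(r), u^{σ,τ}(r))`. -/
theorem stmt14 (n : ℕ) (E : Finset (Fin n × Fin n)) (VMax : Finset (Fin n))
    (hout : ∀ i : Fin n, ∃ j : Fin n, (i, j) ∈ E)
    (herg : IsErgodicGraph E VMax)
    (σ : {i : Fin n // i ∈ VMax} → Fin n) (τ : {i : Fin n // i ∉ VMax} → Fin n)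
    (hXi : InXi E VMax σ τ)
    (r : {e : Fin n × Fin n // e ∈ E} → ℝ) (hr : r ∈ Pcell E VMax σ τ)
    (lam : ℝ) (u : Fin n → ℝ)
    (hnorm : IsNormalizedSol E (combine VMax σ τ) r lam u) :
    ∀ e : {e : Fin n × Fin n // e ∈ E},
      (∀ h : e.1.1 ∈ VMax, σ ⟨e.1.1, h⟩ ≠ e.1.2) →
      (∀ h : e.1.1 ∉ VMax, τ ⟨e.1.1, h⟩ ≠ e.1.2) →
      Zedge E VMax e r = ((lam + u e.1.1 - u e.1.2 : ℝ) : EReal) :=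
  stmt14_general n E VMax σ τ hXi r hr lam u hnorm
end
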